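/- Let q be a prime power, n a positive integer with gcd(q,n)=1, and θ a primitive n-th root of unity in an extension of F_q. If φ: F_q[X]/⟨X^n−1⟩ → F_q[X]/⟨X^n−1⟩ is an algebra automorphism that preserves Hamming weight, then there exist s ∈ Z with gcd(s,n)=1 and t ∈ Z with qt ≡ t (mod n) such that φ(a(X)) = a(θ^t X^s) (mod X^n−1) for all a(X). -/

import Mathlib

/-!
An algebra automorphism `φ` of `F[X]/⟨X^n - 1⟩` is determined by the image of the root `x`.
Since `x` has weight one, so does `φ x`, which is therefore a monomial `c x^s`. From
`(φ x)^n = φ (x^n) = 1` we get `c^n = 1`, so `c = θ^t` in `E`, and `c^q = c` gives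
`θ^(qt) = θ^t`, i.e. `qt ≡ t (mod n)`. If `d = gcd(s, n) > 1`, then `(φ x)^(n/d)` is a scalar,
hence so is `x^(n/d)`; but `X^n - 1` cannot divide `X^m - c` for `0 < m < n`.
-/

open Polynomial

/-- The Hamming weight of an element of `F[X]/⟨X^n − 1⟩`: the number of nonzero
coefficients of its unique representative of degree `< n`. -/
noncomputable def hammingWt {F : Type*} [Field F] {n : ℕ} (hn : n ≠ 0)
    (x : AdjoinRoot (X ^ n - 1 : F[X])) : ℕ :=
  ((AdjoinRoot.modByMonicHom
    (by simpa using monic_X_pow_sub_C (1 : F) hn : (X ^ n - 1 : F[X]).Monic)) x).support.card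

namespace AdjoinRoot

section CommRing

variable {R : Type*} [CommRing R]

theorem algHom_mk_eq_mk_comp {f : R[X]} (ψ : AdjoinRoot f →ₐ[R] AdjoinRoot f) {p : R[X]}
    (hψ : ψ (root f) = mk f p) (a : R[X]) : ψ (mk f a) = mk f (a.comp p) := by
  rw [← aeval_eq a, ← aeval_algHom_apply, hψ, ← aeval_eq (a.comp p), aeval_comp, aeval_eq]

theorem mk_C_mul_X_pow (f : R[X]) (c : R) (s : ℕ) :
    mk f (C c * X ^ s) = algebraMap R (AdjoinRoot f) c * root f ^ s := by
  simp [mk_C]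

theorem root_X_pow_sub_one_pow (n : ℕ) : root (X ^ n - 1 : R[X]) ^ n = 1 := by
  have h : mk (X ^ n - 1 : R[X]) (X ^ n - 1) = 0 := mk_self
  rwa [map_sub, map_pow, mk_X, map_one, sub_eq_zero] at h

theorem root_X_pow_sub_one_pow_ne_algebraMap [IsDomain R] {n m : ℕ} (hm : 0 < m)
    (hmn : m < n) (c : R) : root (X ^ n - 1 : R[X]) ^ m ≠ algebraMap R _ c := by
  intro h
  have hdvd : X ^ n - 1 ∣ X ^ m - C c := by
    rw [← mk_eq_zero, map_sub, map_pow, mk_X, mk_C, ← algebraMap_eq, h, sub_self]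
  have hle := natDegree_le_of_dvd hdvd (X_pow_sub_C_ne_zero hm c)
  rw [← C_1, natDegree_X_pow_sub_C, natDegree_X_pow_sub_C] at hle
  omega

theorem pow_eq_one_of_algHom_root_eq_mk_C_mul_X_pow [IsDomain R] {n : ℕ} (hn : n ≠ 0)
    (ψ : AdjoinRoot (X ^ n - 1 : R[X]) →ₐ[R] AdjoinRoot (X ^ n - 1 : R[X])) {c : R} {s : ℕ}
    (h : ψ (root _) = mk _ (C c * X ^ s)) : c ^ n = 1 := by
  have hdeg : (X ^ n - 1 : R[X]).degree ≠ 0 := by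
    rw [← C_1, degree_X_pow_sub_C (Nat.pos_of_ne_zero hn)]
    exact_mod_cast hn
  apply of.injective_of_degree_ne_zero hdeg
  rw [map_one, ← algebraMap_eq, map_pow]
  calc algebraMap R _ c ^ n = (algebraMap R _ c * root _ ^ s) ^ n := by
        rw [mul_pow, ← pow_mul, mul_comm s, pow_mul, root_X_pow_sub_one_pow, one_pow, mul_one]
    _ = ψ (root _ ^ n) := by rw [map_pow, h, mk_C_mul_X_pow]
    _ = 1 := by rw [root_X_pow_sub_one_pow, map_one]

theorem coprime_of_algHom_root_eq_mk_C_mul_X_pow [IsDomain R] {n : ℕ} (hn : 0 < n)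
    (ψ : AdjoinRoot (X ^ n - 1 : R[X]) →ₐ[R] AdjoinRoot (X ^ n - 1 : R[X]))
    (hψ : Function.Injective ψ) {c : R} {s : ℕ} (h : ψ (root _) = mk _ (C c * X ^ s)) :
    s.Coprime n := by
  by_contra hs
  set g := s.gcd n
  have hg : 1 < g := lt_of_le_of_ne (Nat.gcd_pos_of_pos_right s hn) (Ne.symm hs)
  obtain ⟨k, hk⟩ : g ∣ s := Nat.gcd_dvd_left s n
  set m := n / g
  have hsm : s * m = n * k := by
    rw [hk, mul_right_comm, Nat.mul_div_cancel' (Nat.gcd_dvd_right s n), mul_comm]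
  refine root_X_pow_sub_one_pow_ne_algebraMap (Nat.div_pos (Nat.gcd_le_right _ hn) (by omega))
    (Nat.div_lt_self hn hg) (c ^ m) (hψ ?_)
  rw [map_pow, h, mk_C_mul_X_pow, mul_pow, ← pow_mul, hsm, pow_mul, root_X_pow_sub_one_pow,
    one_pow, mul_one, ← map_pow, AlgHom.commutes]

end CommRing

variable {F : Type*} [Field F] {n : ℕ}

theorem hammingWt_root (hn : n ≠ 0) : hammingWt hn (root (X ^ n - 1 : F[X])) = 1 := by
  unfold hammingWt
  rw [← mk_X, modByMonicHom_mk]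
  obtain rfl | hn1 : n = 1 ∨ 1 < n := by omega
  · rw [pow_one, ← C_1, modByMonic_X_sub_C_eq_C_eval, eval_X, support_C one_ne_zero,
      Finset.card_singleton]
  · rw [(modByMonic_eq_self_iff (by simpa using monic_X_pow_sub_C (1 : F) hn)).mpr, support_X,
      Finset.card_singleton]
    rw [← C_1, degree_X_pow_sub_C (by omega), degree_X]
    exact_mod_cast hn1

theorem exists_eq_mk_C_mul_X_pow_of_hammingWt_eq_one (hn : n ≠ 0)
    {x : AdjoinRoot (X ^ n - 1 : F[X])} (hx : hammingWt hn x = 1) :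
    ∃ (c : F) (s : ℕ), x = mk _ (C c * X ^ s) := by
  obtain ⟨s, c, -, hxcs⟩ := card_support_eq_one.mp hx
  exact ⟨c, s, by rw [← hxcs, mk_leftInverse]⟩

end AdjoinRoot

theorem IsPrimitiveRoot.exists_card_mul_modEq_and_algebraMap_eq_pow {F E : Type*} [Field F]
    [Fintype F] [CommRing E] [IsDomain E] [Algebra F E] {θ : E} {n : ℕ}
    (hθ : IsPrimitiveRoot θ n) (hn : 0 < n) {c : F} (hc : c ^ n = 1) :
    ∃ t, Fintype.card F * t ≡ t [MOD n] ∧ algebraMap F E c = θ ^ t := by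
  have : NeZero n := ⟨hn.ne'⟩
  obtain ⟨t, -, hθt⟩ := hθ.eq_pow_of_pow_eq_one (ξ := algebraMap F E c)
    (by rw [← map_pow, hc, map_one])
  refine ⟨t, ?_, hθt.symm⟩
  rw [hθ.eq_orderOf, ← (hθ.isOfFinOrder hn.ne').pow_eq_pow_iff_modEq, mul_comm, pow_mul, hθt,
    ← map_pow, FiniteField.pow_card]

theorem stmt0 (F : Type*) [Field F] [Fintype F] (n : ℕ) (hn : 0 < n)
    (E : Type*) [Field E] [Algebra F E] (θ : E) (hθ : IsPrimitiveRoot θ n)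
    (φ : AdjoinRoot (X ^ n - 1 : F[X]) ≃ₐ[F] AdjoinRoot (X ^ n - 1 : F[X]))
    (hφ : ∀ x, hammingWt hn.ne' (φ x) = hammingWt hn.ne' x) :
    ∃ (s t : ℕ) (b : F), Nat.Coprime s n ∧
      Fintype.card F * t ≡ t [MOD n] ∧
      algebraMap F E b = θ ^ t ∧
      ∀ a : F[X], φ (AdjoinRoot.mk _ a) = AdjoinRoot.mk _ (a.comp (C b * X ^ s)) := by
  obtain ⟨c, s, hφX⟩ := AdjoinRoot.exists_eq_mk_C_mul_X_pow_of_hammingWt_eq_one hn.ne'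
    ((hφ _).trans (AdjoinRoot.hammingWt_root hn.ne'))
  obtain ⟨t, hqt, hct⟩ := hθ.exists_card_mul_modEq_and_algebraMap_eq_pow hn
    (AdjoinRoot.pow_eq_one_of_algHom_root_eq_mk_C_mul_X_pow hn.ne' φ.toAlgHom hφX)
  have hs := AdjoinRoot.coprime_of_algHom_root_eq_mk_C_mul_X_pow hn φ.toAlgHom φ.injective hφX
  exact ⟨s, t, c, hs, hqt, hct, AdjoinRoot.algHom_mk_eq_mk_comp φ.toAlgHom hφX⟩
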